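/- arXiv:2407.14819 — 5 statements merged into one kernel-verified Lean document; each statement's English description precedes it below -/
import Mathlib

section
/- Let φ ∈ Γ₀(ℝ^m × ℝ^l), let L ∈ ℝ^{m×n}, and define L̄ : ℝ^n × ℝ^l → ℝ^m × ℝ^l by L̄(x, σ) = (Lx, σ). Assume ψ(u) := inf_σ φ(u,σ) is proper. For any x ∈ ℝ^n, ς ∈ ℝ^l, s ∈ ℝ^n: (s, 0) ∈ ∂(φ ∘ L̄)(x, ς) if and only if s ∈ ∂(ψ ∘ L)(x) and ς ∈ argmin_{σ} φ(Lx, σ). -/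
open scoped Matrix

/-- with L̄(x,σ) = (Lx,σ), (s,0) ∈ ∂(φ∘L̄)(x,ς) ⟺ s ∈ ∂(ψ∘L)(x) and
ς ∈ argmin_σ φ(Lx,σ), where ψ(u) = inf_σ φ(u,σ). -/
theorem stmt_7 {m l n : ℕ}
    (φ : ((Fin m → ℝ) × (Fin l → ℝ)) → EReal)
    (hproper : (∀ p, φ p ≠ ⊥) ∧ ∃ p, φ p ≠ ⊤)
    (hlsc : LowerSemicontinuous φ)
    (hconvex : ∀ p q : (Fin m → ℝ) × (Fin l → ℝ), ∀ a b : ℝ, 0 ≤ a → 0 ≤ b → a + b = 1 →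
      φ (a • p + b • q) ≤ (a : EReal) * φ p + (b : EReal) * φ q)
    (L : Matrix (Fin m) (Fin n) ℝ)
    (ψ : (Fin m → ℝ) → EReal)
    (hψ : ∀ u, ψ u = ⨅ σ : Fin l → ℝ, φ (u, σ))
    (hψproper : (∀ u, ψ u ≠ ⊥) ∧ ∃ u, ψ u ≠ ⊤) :
    ∀ (x : Fin n → ℝ) (ς : Fin l → ℝ) (s : Fin n → ℝ),
      (∀ p : (Fin n → ℝ) × (Fin l → ℝ),
          φ (L.mulVec x, ς)
              + (((p.1 - x) ⬝ᵥ s + (p.2 - ς) ⬝ᵥ (0 : Fin l → ℝ) : ℝ) : EReal)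
            ≤ φ (L.mulVec p.1, p.2))
        ↔ ((∀ z : Fin n → ℝ,
              ψ (L.mulVec x) + (((z - x) ⬝ᵥ s : ℝ) : EReal) ≤ ψ (L.mulVec z)) ∧
            ∀ σ : Fin l → ℝ, φ (L.mulVec x, ς) ≤ φ (L.mulVec x, σ)) := by
  intro x ς s
  constructor
  · intro h
    have hmin : ∀ σ, φ (L.mulVec x, ς) ≤ φ (L.mulVec x, σ) := by
      intro σ
      have := h (x, σ)
      simpa using this
    have heq : ψ (L.mulVec x) = φ (L.mulVec x, ς) := by
      rw [hψ]
      exact le_antisymm (iInf_le _ ς) (le_iInf hmin)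
    refine ⟨?_, hmin⟩
    intro z
    rw [heq, hψ]
    refine le_iInf fun σ => ?_
    have := h (z, σ)
    simpa using this
  · rintro ⟨h1, h2⟩ p
    have heq : ψ (L.mulVec x) = φ (L.mulVec x, ς) := by
      rw [hψ]
      exact le_antisymm (iInf_le _ ς) (le_iInf h2)
    have h3 := h1 p.1
    rw [heq, hψ] at h3
    have h4 : (⨅ σ : Fin l → ℝ, φ (L.mulVec p.1, σ)) ≤ φ (L.mulVec p.1, p.2) :=
      iInf_le _ p.2
    have := le_trans h3 h4
    simpa using this
end

section
/- Let γ > 0 and for u, σ ∈ ℝ consider the perspective function h(u,σ) = u²/(2σ) + σ/2 for σ > 0, h(0,0) = 0, ∞ otherwise. Then prox_{γh}(u,σ) = (0,0) if 2γσ + u² ≤ γ², prox_{γh}(u,σ) = (0, σ − γ/2) if u = 0 and σ > γ/2, and otherwise prox_{γh}(u,σ) = (u − γt·u/|u|, σ + γ(t² − 1)/2) where t > 0 is the unique positive root of t³ + (2σ/γ + 1)t − (2/γ)|u| = 0. -/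
/-- The perspective of u ↦ u²/2 + 1/2. -/
noncomputable def hpersp : ℝ × ℝ → EReal := fun p =>
  if 0 < p.2 then ((p.1 ^ 2 / (2 * p.2) + p.2 / 2 : ℝ) : EReal)
  else if p.1 = 0 ∧ p.2 = 0 then (0 : EReal) else ⊤

/-- Proximity operator (as a set of minimizers) of an extended-real function on ℝ². -/
def proxSet2 (f : ℝ × ℝ → EReal) (x : ℝ × ℝ) : Set (ℝ × ℝ) :=
  {p | ∀ q : ℝ × ℝ,
    f p + (((1/2) * ((x.1 - p.1) ^ 2 + (x.2 - p.2) ^ 2) : ℝ) : EReal)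
      ≤ f q + (((1/2) * ((x.1 - q.1) ^ 2 + (x.2 - q.2) ^ 2) : ℝ) : EReal)}

noncomputable def Fr (γ u σ : ℝ) (q : ℝ × ℝ) : ℝ :=
  (if 0 < q.2 then γ * (q.1 ^ 2 / (2 * q.2) + q.2 / 2) else 0)
    + (1/2) * ((u - q.1) ^ 2 + (σ - q.2) ^ 2)

lemma Fr_pos (γ u σ y τ : ℝ) (h : 0 < τ) :
    Fr γ u σ (y, τ) = γ * (y^2/(2*τ) + τ/2) + (1/2) * ((u - y)^2 + (σ - τ)^2) := by
  simp only [Fr]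
  rw [if_pos h]

lemma Fr_zero (γ u σ : ℝ) : Fr γ u σ (0, 0) = (1/2) * (u^2 + σ^2) := by
  simp only [Fr]
  norm_num

lemma obj_dom (γ u σ : ℝ) (q : ℝ × ℝ) (hq : 0 < q.2 ∨ q = (0, 0)) :
    (γ : EReal) * hpersp q + (((1/2) * ((u - q.1) ^ 2 + (σ - q.2) ^ 2) : ℝ) : EReal)
      = ((Fr γ u σ q : ℝ) : EReal) := by
  rcases hq with h | h
  · rw [hpersp, Fr, if_pos h, if_pos h, ← EReal.coe_mul, ← EReal.coe_add]
  · subst h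
    rw [hpersp, Fr]
    norm_num

lemma obj_top (γ : ℝ) (hγ : 0 < γ) (u σ : ℝ) (q : ℝ × ℝ) (h1 : ¬ 0 < q.2) (h2 : q ≠ (0, 0)) :
    (γ : EReal) * hpersp q + (((1/2) * ((u - q.1) ^ 2 + (σ - q.2) ^ 2) : ℝ) : EReal) = ⊤ := by
  have hq : ¬ (q.1 = 0 ∧ q.2 = 0) := by
    rintro ⟨a, b⟩
    exact h2 (Prod.ext a b)
  rw [hpersp, if_neg h1, if_neg hq, EReal.coe_mul_top_of_pos hγ, EReal.top_add_coe]

lemma mem_prox_iff (γ : ℝ) (hγ : 0 < γ) (u σ : ℝ) (p : ℝ × ℝ) :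
    p ∈ proxSet2 (fun p => (γ : EReal) * hpersp p) (u, σ)
      ↔ (0 < p.2 ∨ p = (0, 0)) ∧
        ∀ q : ℝ × ℝ, (0 < q.2 ∨ q = (0, 0)) → Fr γ u σ p ≤ Fr γ u σ q := by
  simp only [proxSet2, Set.mem_setOf_eq]
  constructor
  · intro hp
    have hdom : 0 < p.2 ∨ p = (0, 0) := by
      by_contra hc
      push_neg at hc
      have h0 := hp (0, 0)
      rw [obj_top γ hγ u σ p (not_lt.2 hc.1) hc.2, obj_dom γ u σ (0, 0) (Or.inr rfl)] at h0
      exact (EReal.coe_lt_top _).not_ge h0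
    refine ⟨hdom, fun q hq => ?_⟩
    have h := hp q
    rw [obj_dom γ u σ p hdom, obj_dom γ u σ q hq] at h
    exact EReal.coe_le_coe_iff.1 h
  · rintro ⟨hdom, hmin⟩ q
    rw [obj_dom γ u σ p hdom]
    by_cases hq : 0 < q.2 ∨ q = (0, 0)
    · rw [obj_dom γ u σ q hq]
      exact EReal.coe_le_coe_iff.2 (hmin q hq)
    · push_neg at hq
      rw [obj_top γ hγ u σ q (not_lt.2 hq.1) hq.2]
      exact le_top

lemma prox_singleton (γ : ℝ) (hγ : 0 < γ) (u σ : ℝ) (ps : ℝ × ℝ)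
    (hdom : 0 < ps.2 ∨ ps = (0, 0))
    (hmin : ∀ q : ℝ × ℝ, (0 < q.2 ∨ q = (0, 0)) → Fr γ u σ ps ≤ Fr γ u σ q)
    (huniq : ∀ q : ℝ × ℝ, (0 < q.2 ∨ q = (0, 0)) → Fr γ u σ q ≤ Fr γ u σ ps → q = ps) :
    proxSet2 (fun p => (γ : EReal) * hpersp p) (u, σ) = {ps} := by
  ext p
  rw [Set.mem_singleton_iff, mem_prox_iff γ hγ u σ p]
  constructor
  · rintro ⟨hd, hm⟩
    exact huniq p hd (hm ps hdom)
  · rintro rfl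
    exact ⟨hdom, hmin⟩

lemma case1_lt (γ u σ y τ : ℝ) (hγ : 0 < γ) (hcond : 2*γ*σ + u^2 ≤ γ^2) (hτ : 0 < τ) :
    (1/2) * (u^2 + σ^2) < γ * (y^2/(2*τ) + τ/2) + (1/2) * ((u - y)^2 + (σ - τ)^2) := by
  rw [← sub_pos]
  have e : γ * (y^2/(2*τ) + τ/2) + (1/2) * ((u - y)^2 + (σ - τ)^2) - (1/2) * (u^2 + σ^2)
      = ((γ+τ)*y^2 - 2*u*τ*y + τ^2*(γ+τ-2*σ)) / (2*τ) := by
    field_simp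
    ring
  rw [e]
  apply div_pos _ (by linarith)
  have hσ : 2*σ ≤ γ := by nlinarith [sq_nonneg u]
  nlinarith [sq_nonneg ((γ+τ)*y - u*τ), mul_pos (mul_pos hτ hτ) hτ, mul_pos hγ hτ,
    mul_pos (mul_pos hγ hτ) hτ, sq_nonneg y,
    mul_nonneg (mul_nonneg hτ.le hτ.le) (by linarith : (0:ℝ) ≤ γ - 2*σ),
    mul_le_mul_of_nonneg_left hcond (mul_nonneg hτ.le hτ.le)]

lemma case2_zero (γ σ : ℝ) (hγ : 0 < γ) (hσ : γ/2 < σ) :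
    γ * ((σ - γ/2)/2) + (1/2) * (γ/2)^2 < (1/2) * σ^2 := by
  nlinarith [sq_nonneg (σ - γ/2)]

lemma case2_pos (γ σ y τ : ℝ) (hγ : 0 < γ) (hτ : 0 < τ) :
    γ * ((σ - γ/2)/2) + (1/2) * (γ/2)^2
      ≤ γ * (y^2/(2*τ) + τ/2) + (1/2) * ((0 - y)^2 + (σ - τ)^2) := by
  rw [← sub_nonneg]
  have e : γ * (y^2/(2*τ) + τ/2) + (1/2) * ((0 - y)^2 + (σ - τ)^2)
      - (γ * ((σ - γ/2)/2) + (1/2) * (γ/2)^2)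
      = γ*y^2/(2*τ) + y^2/2 + (1/2)*(τ - (σ - γ/2))^2 := by
    field_simp
    ring
  rw [e]
  have h0 : 0 ≤ γ*y^2/(2*τ) := by positivity
  nlinarith [sq_nonneg y, sq_nonneg (τ - (σ - γ/2))]

lemma case2_eq (γ σ y τ : ℝ) (hγ : 0 < γ) (hτ : 0 < τ)
    (hle : γ * (y^2/(2*τ) + τ/2) + (1/2) * ((0 - y)^2 + (σ - τ)^2)
      ≤ γ * ((σ - γ/2)/2) + (1/2) * (γ/2)^2) : y = 0 ∧ τ = σ - γ/2 := by
  have e : γ * (y^2/(2*τ) + τ/2) + (1/2) * ((0 - y)^2 + (σ - τ)^2)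
      - (γ * ((σ - γ/2)/2) + (1/2) * (γ/2)^2)
      = γ*y^2/(2*τ) + y^2/2 + (1/2)*(τ - (σ - γ/2))^2 := by
    field_simp
    ring
  have h0 : 0 ≤ γ*y^2/(2*τ) := by positivity
  have h1 : γ*y^2/(2*τ) + y^2/2 + (1/2)*(τ - (σ - γ/2))^2 ≤ 0 := by
    linarith [e ▸ sub_nonpos.2 hle]
  constructor
  · nlinarith [sq_nonneg (τ - (σ - γ/2)), sq_nonneg y]
  · nlinarith [sq_nonneg (τ - (σ - γ/2)), sq_nonneg y]

lemma key_id (γ t w z τ τs σ : ℝ) (hγ : 0 < γ) (hτ : 0 < τ) (hτs : 0 < τs)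
    (hw : w = γ*t + t*τs) (hσ : σ = τs - γ*(t^2-1)/2) :
    γ*((w - γ*t)^2/(2*τs) + τs/2) + (1/2)*((γ*t)^2 + (σ - τs)^2)
      + ((γ+τs)^2*((γ+τ)*z - w*τ)^2 + τ*(τ - τs)^2*(γ*w^2 + (γ+τ)*(γ+τs)^2))
        / (2*τ*(γ+τ)*(γ+τs)^2)
      = γ*(z^2/(2*τ) + τ/2) + (1/2)*((w - z)^2 + (σ - τ)^2) := by
  subst hw hσ
  have h1 : τs ≠ 0 := ne_of_gt hτs
  have h2 : τ ≠ 0 := ne_of_gt hτ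
  have h3 : γ + τ ≠ 0 := by positivity
  have h4 : γ + τs ≠ 0 := by positivity
  field_simp
  ring

lemma key_zero (γ t w τs σ : ℝ) (hτs : 0 < τs)
    (hw : w = γ*t + t*τs) (hσ : σ = τs - γ*(t^2-1)/2) :
    γ*((w - γ*t)^2/(2*τs) + τs/2) + (1/2)*((γ*t)^2 + (σ - τs)^2) + τs^2*(t^2+1)/2
      = (1/2)*(w^2 + σ^2) := by
  subst hw hσ
  have h1 : τs ≠ 0 := ne_of_gt hτs
  field_simp
  ring

lemma cubic_exists (a b : ℝ) (hb : 0 < b) : ∃ t : ℝ, 0 < t ∧ t^3 + a*t - b = 0 := by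
  set T := 1 + |a| + b with hT
  have hT1 : 1 ≤ T := by
    have := abs_nonneg a
    simp only [hT]; linarith
  have hT0 : (0:ℝ) ≤ T := by linarith
  have hfT : 0 < T^3 + a*T - b := by
    have h3 : T^2 ≤ T^3 := by nlinarith
    have h4 : (-(|a|))*T ≤ a*T := by nlinarith [neg_abs_le a]
    have h5 : T^2 = T + (|a|)*T + b*T := by rw [hT]; ring
    nlinarith [hb, hT1]
  have hcont : ContinuousOn (fun t : ℝ => t^3 + a*t - b) (Set.Icc 0 T) := by
    apply Continuous.continuousOn
    continuity
  have hmem : (0:ℝ) ∈ Set.Icc ((fun t : ℝ => t^3 + a*t - b) 0) ((fun t : ℝ => t^3 + a*t - b) T) := by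
    constructor <;> simp <;> nlinarith
  obtain ⟨t, htI, hft⟩ := intermediate_value_Icc hT0 hcont hmem
  refine ⟨t, ?_, hft⟩
  rcases eq_or_lt_of_le htI.1 with h | h
  · exfalso
    rw [← h] at hft
    simp at hft
    nlinarith
  · exact h

lemma cubic_uniq (a b t1 t2 : ℝ) (hb : 0 < b) (h1p : 0 < t1) (h2p : 0 < t2)
    (h1 : t1^3 + a*t1 - b = 0) (h2 : t2^3 + a*t2 - b = 0) : t1 = t2 := by
  have k1 : 0 < t1^2 + a := by
    by_contra hc
    push_neg at hc
    nlinarith [mul_nonpos_of_nonneg_of_nonpos h1p.le hc]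
  have hf : (t1 - t2)*(t1^2 + t1*t2 + t2^2 + a) = 0 := by linear_combination h1 - h2
  have hpos : 0 < t1^2 + t1*t2 + t2^2 + a := by nlinarith [mul_pos h1p h2p, sq_nonneg t2]
  rcases mul_eq_zero.1 hf with h | h
  · linarith [sub_eq_zero.1 h]
  · exact absurd h (ne_of_gt hpos)

lemma root_lt (γ u σ t : ℝ) (hγ : 0 < γ) (ht : 0 < t) (h1 : γ^2 < 2*γ*σ + u^2)
    (hcubic : γ*t^3 + (2*σ+γ)*t = 2*|u|) : γ*t < |u| := by
  by_contra hle
  push_neg at hle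
  have hfac : 0 < (|u|)*t + γ*t^2 + 2*γ := by positivity
  have hw2 : |u|^2 = u^2 := sq_abs u
  nlinarith [mul_nonneg (sub_nonneg.2 hle) hfac.le,
    mul_lt_mul_of_pos_right h1 ht, mul_pos hγ ht]

set_option maxHeartbeats 2000000 in
/-- closed-form expression of prox_{γh} for the perspective function h. -/
theorem stmt_12 (γ : ℝ) (hγ : 0 < γ) (u σ : ℝ) :
    (2 * γ * σ + u ^ 2 ≤ γ ^ 2 →
      proxSet2 (fun p => (γ : EReal) * hpersp p) (u, σ) = {((0 : ℝ), (0 : ℝ))}) ∧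
    (u = 0 → γ / 2 < σ →
      proxSet2 (fun p => (γ : EReal) * hpersp p) (u, σ) = {((0 : ℝ), σ - γ / 2)}) ∧
    (¬ (2 * γ * σ + u ^ 2 ≤ γ ^ 2) → ¬ (u = 0 ∧ γ / 2 < σ) →
      (∃! t : ℝ, 0 < t ∧ t ^ 3 + (2 * σ / γ + 1) * t - (2 / γ) * |u| = 0) ∧
      ∀ t : ℝ, 0 < t → t ^ 3 + (2 * σ / γ + 1) * t - (2 / γ) * |u| = 0 →
        proxSet2 (fun p => (γ : EReal) * hpersp p) (u, σ)
          = {(u - γ * t * (u / |u|), σ + γ * (t ^ 2 - 1) / 2)}) := by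
  refine ⟨?_, ?_, ?_⟩
  · -- Case 1
    intro hcond
    apply prox_singleton γ hγ u σ ((0:ℝ), (0:ℝ)) (Or.inr rfl)
    · rintro ⟨y, τ⟩ (h | h)
      · rw [Fr_zero, Fr_pos γ u σ y τ h]
        exact (case1_lt γ u σ y τ hγ hcond h).le
      · rw [h]
    · rintro ⟨y, τ⟩ (h | h) hle
      · exfalso
        rw [Fr_zero, Fr_pos γ u σ y τ h] at hle
        exact absurd hle (not_le.2 (case1_lt γ u σ y τ hγ hcond h))
      · exact h
  · -- Case 2
    intro hu hσ
    subst hu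
    have hps : Fr γ 0 σ (0, σ - γ/2) = γ * ((σ - γ/2)/2) + (1/2) * (γ/2)^2 := by
      rw [Fr_pos γ 0 σ 0 (σ - γ/2) (by linarith)]
      ring_nf
    apply prox_singleton γ hγ 0 σ ((0:ℝ), σ - γ/2) (Or.inl (by show (0:ℝ) < σ - γ/2; linarith))
    · rintro ⟨y, τ⟩ (h | h)
      · rw [hps, Fr_pos γ 0 σ y τ h]
        exact case2_pos γ σ y τ hγ h
      · rw [h, Fr_zero, hps]
        have h00 : (1/2) * ((0:ℝ)^2 + σ^2) = (1/2) * σ^2 := by norm_num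
        rw [h00]
        exact (case2_zero γ σ hγ hσ).le
    · rintro ⟨y, τ⟩ (h | h) hle
      · rw [hps, Fr_pos γ 0 σ y τ h] at hle
        obtain ⟨hy, hτ⟩ := case2_eq γ σ y τ hγ h hle
        exact Prod.ext hy hτ
      · exfalso
        have h00 : (1/2) * ((0:ℝ)^2 + σ^2) = (1/2) * σ^2 := by norm_num
        rw [h, Fr_zero, hps, h00] at hle
        linarith [case2_zero γ σ hγ hσ]
  · -- Case 3
    intro h1 h2
    push_neg at h1
    have hu : u ≠ 0 := by
      intro h
      apply h2
      refine ⟨h, ?_⟩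
      rw [h] at h1
      nlinarith
    have hw : 0 < |u| := abs_pos.2 hu
    have hw2 : |u|^2 = u^2 := sq_abs u
    have hb : 0 < (2/γ) * |u| := by positivity
    obtain ⟨t₀, ht₀, hr₀⟩ := cubic_exists (2*σ/γ + 1) ((2/γ) * |u|) hb
    constructor
    · refine ⟨t₀, ⟨ht₀, by linear_combination hr₀⟩, ?_⟩
      rintro s ⟨hs, hrs⟩
      exact cubic_uniq (2*σ/γ + 1) ((2/γ) * |u|) s t₀ hb hs ht₀ (by linear_combination hrs) hr₀
    · intro t ht hroot
      have hcubic : γ*t^3 + (2*σ+γ)*t = 2*|u| := by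
        have h := congrArg (fun x => γ * x) hroot
        simp only [mul_zero] at h
        field_simp at h
        linarith
      have htw : γ*t < |u| := root_lt γ u σ t hγ ht h1 hcubic
      have hA : t * (σ + γ*(t^2-1)/2) = |u| - γ*t := by linear_combination hcubic/2
      have hτs : 0 < σ + γ*(t^2-1)/2 := by
        by_contra hc
        push_neg at hc
        nlinarith [mul_nonpos_of_nonneg_of_nonpos ht.le hc]
      have hwdef : |u| = γ*t + t*(σ + γ*(t^2-1)/2) := by linarith [hA]
      have hs2 : (u/|u|)^2 = 1 := by
        rw [div_pow, sq_abs]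
        exact div_self (by positivity)
      have hsu : (u/|u|) * |u| = u := div_mul_cancel₀ u (ne_of_gt hw)
      set s : ℝ := u/|u| with hsdef
      set τs : ℝ := σ + γ*(t^2-1)/2 with hτsdef
      have hσdef : σ = τs - γ*(t^2-1)/2 := by rw [hτsdef]; ring
      have e3 : (u - γ*t*s)^2 = (|u| - γ*t)^2 := by
        linear_combination (|u|^2 + γ^2*t^2 - 2*γ*t*(|u|))*hs2 + (2*γ*t*s - s*(|u|) - u)*hsu
      have e4 : (u - (u - γ*t*s))^2 = (γ*t)^2 := by
        linear_combination (γ^2*t^2)*hs2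
      have hFrP : Fr γ u σ (u - γ*t*s, τs)
          = γ*((|u| - γ*t)^2/(2*τs) + τs/2) + (1/2)*((γ*t)^2 + (σ - τs)^2) := by
        rw [Fr_pos γ u σ _ _ hτs, e3, e4]
      apply prox_singleton γ hγ u σ (u - γ*t*s, τs) (Or.inl hτs)
      · rintro ⟨y, τ⟩ (h | h)
        · rw [hFrP, Fr_pos γ u σ y τ h]
          have e1 : y^2 = (s*y)^2 := by linear_combination (-y^2)*hs2
          have e2 : (u - y)^2 = (|u| - s*y)^2 := by
            linear_combination (-(y^2 - |u|^2))*hs2 + (-(u + s*(|u|) - 2*y))*hsu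
          rw [e1, e2]
          have hid := key_id γ t (|u|) (s*y) τ τs σ hγ h hτs hwdef hσdef
          rw [← hid]
          have hD : (0:ℝ) < 2*τ*(γ+τ)*(γ+τs)^2 := by positivity
          have hN : (0:ℝ) ≤ (γ+τs)^2*((γ+τ)*(s*y) - (|u|)*τ)^2
              + τ*(τ - τs)^2*(γ*(|u|)^2 + (γ+τ)*(γ+τs)^2) := by positivity
          linarith [div_nonneg hN hD.le]
        · rw [h, Fr_zero, hFrP]
          have hz := key_zero γ t (|u|) τs σ hτs hwdef hσdef
          rw [hw2] at hz
          have hB : (0:ℝ) ≤ τs^2*(t^2+1)/2 := by positivity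
          linarith [hz, hB]
      · rintro ⟨y, τ⟩ (h | h) hle
        · rw [hFrP, Fr_pos γ u σ y τ h] at hle
          have e1 : y^2 = (s*y)^2 := by linear_combination (-y^2)*hs2
          have e2 : (u - y)^2 = (|u| - s*y)^2 := by
            linear_combination (-(y^2 - |u|^2))*hs2 + (-(u + s*(|u|) - 2*y))*hsu
          rw [e1, e2] at hle
          have hid := key_id γ t (|u|) (s*y) τ τs σ hγ h hτs hwdef hσdef
          have hD : (0:ℝ) < 2*τ*(γ+τ)*(γ+τs)^2 := by positivity
          have hND : ((γ+τs)^2*((γ+τ)*(s*y) - (|u|)*τ)^2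
              + τ*(τ - τs)^2*(γ*(|u|)^2 + (γ+τ)*(γ+τs)^2)) / (2*τ*(γ+τ)*(γ+τs)^2) ≤ 0 := by
            linarith
          have hN0 : (γ+τs)^2*((γ+τ)*(s*y) - (|u|)*τ)^2
              + τ*(τ - τs)^2*(γ*(|u|)^2 + (γ+τ)*(γ+τs)^2) ≤ 0 := by
            by_contra hc
            push_neg at hc
            exact absurd hND (not_le.2 (div_pos hc hD))
          have hT1 : (0:ℝ) ≤ (γ+τs)^2*((γ+τ)*(s*y) - (|u|)*τ)^2 := by positivity
          have hT2 : (0:ℝ) ≤ τ*(τ - τs)^2*(γ*(|u|)^2 + (γ+τ)*(γ+τs)^2) := by positivity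
          have hT2z : τ*(τ - τs)^2*(γ*(|u|)^2 + (γ+τ)*(γ+τs)^2) = 0 := le_antisymm (by linarith) hT2
          have hfac : (0:ℝ) < γ*(|u|)^2 + (γ+τ)*(γ+τs)^2 := by positivity
          have hττs : τ = τs := by
            have hsq : (τ - τs)^2 = 0 := by
              rcases mul_eq_zero.1 hT2z with h' | h'
              · rcases mul_eq_zero.1 h' with h'' | h''
                · exact absurd h'' (ne_of_gt h)
                · exact h''
              · exact absurd h' (ne_of_gt hfac)
            have := pow_eq_zero_iff two_ne_zero |>.1 hsq
            linarith [sub_eq_zero.1 this]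
          subst hττs
          have hT1z : (γ+τs)^2*((γ+τs)*(s*y) - (|u|)*τs)^2 = 0 := le_antisymm (by linarith) hT1
          have hX : (γ+τs)*(s*y) - (|u|)*τs = 0 := by
            have h4 : ((γ+τs):ℝ)^2 ≠ 0 := by positivity
            have := (mul_eq_zero.1 hT1z).resolve_left h4
            exact pow_eq_zero_iff two_ne_zero |>.1 this
          have hsy : s*y = t*τs := by
            have hne : (γ + τs : ℝ) ≠ 0 := by positivity
            apply mul_left_cancel₀ hne
            linear_combination hX + τs*hwdef
          have hy : y = u - γ*t*s := by
            linear_combination (-y)*hs2 + s*hsy + hsu + (-s)*hwdef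
          exact Prod.ext hy rfl
        · exfalso
          rw [h, Fr_zero, hFrP] at hle
          have hz := key_zero γ t (|u|) τs σ hτs hwdef hσdef
          rw [hw2] at hz
          have hB : (0:ℝ) < τs^2*(t^2+1)/2 := by positivity
          linarith [hz, hB]
end

section
/- Let R ∈ ℝ^{n×n} and P ∈ ℝ^{n×n} be symmetric with P positive definite and R positive semidefinite, and let κ > 0. Then R − (κ/2)·R P⁻¹ R is positive semidefinite if and only if P − (κ/2)·R is positive semidefinite. -/
/-!
Put `A = (κ/2) R`, so that `κ/2` times the left-hand matrix is `A - A P⁻¹ A`. The block matrix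
`[[A, A], [A, P]]` is congruent, via `[[1, 1], [0, 1]]`, to `diag(A, P - A)`, so it is positive
semidefinite iff `P - A` is; since `P` is positive definite, its Schur complement with respect to
`P` shows that it is positive semidefinite iff `A - A P⁻¹ A` is.
-/

open scoped Matrix

namespace Matrix

variable {m n : Type*}

section CommRing

variable {R : Type*} [CommRing R] [PartialOrder R] [StarRing R] [StarOrderedRing R]
variable [Fintype m] [Fintype n]

theorem posSemidef_fromBlocks_zero_iff {A : Matrix m m R} {D : Matrix n n R} :
    (fromBlocks A 0 0 D).PosSemidef ↔ A.PosSemidef ∧ D.PosSemidef := by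
  refine ⟨fun h => ⟨h.submatrix Sum.inl, h.submatrix Sum.inr⟩, fun ⟨hA, hD⟩ => ?_⟩
  refine .of_dotProduct_mulVec_nonneg (hA.1.fromBlocks (by simp) hD.1) fun x => ?_
  obtain ⟨u, v, rfl⟩ : ∃ u v, x = Sum.elim u v := ⟨_, _, (Sum.elim_comp_inl_inr x).symm⟩
  simp only [Function.star_sumElim, fromBlocks_mulVec, zero_mulVec, add_zero, zero_add,
    sumElim_dotProduct_sumElim]
  exact add_nonneg (hA.dotProduct_mulVec_nonneg u) (hD.dotProduct_mulVec_nonneg v)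

theorem posSemidef_fromBlocks_self_iff [DecidableEq n] {A D : Matrix n n R} :
    (fromBlocks A A A D).PosSemidef ↔ A.PosSemidef ∧ (D - A).PosSemidef := by
  set U : Matrix (n ⊕ n) (n ⊕ n) R := fromBlocks 1 1 0 1
  have hU : IsUnit U := by simp [U, isUnit_iff_isUnit_det]
  have hcongr : fromBlocks A A A D = star U * fromBlocks A 0 0 (D - A) * U := by
    simp [U, star_eq_conjTranspose, fromBlocks_conjTranspose, fromBlocks_multiply]
  rw [hcongr, Matrix.IsUnit.posSemidef_star_left_conjugate_iff hU, posSemidef_fromBlocks_zero_iff]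

end CommRing

section Field

variable {K : Type*} [Field K] [LinearOrder K] [StarRing K] [StarOrderedRing K]

theorem posSemidef_smul_iff {M : Matrix n n K} {c : K} (hc : 0 < c) :
    (c • M).PosSemidef ↔ M.PosSemidef := by
  refine ⟨fun h => ?_, fun h => h.smul hc.le⟩
  simpa [smul_smul, inv_mul_cancel₀ hc.ne'] using h.smul (inv_nonneg.mpr hc.le)

variable [Fintype n] [DecidableEq n]

theorem PosSemidef.posSemidef_sub_mul_inv_mul_iff {A D : Matrix n n K}
    (hA : A.PosSemidef) (hD : D.PosDef) :
    (A - A * D⁻¹ * A).PosSemidef ↔ (D - A).PosSemidef := by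
  have := hD.isUnit.invertible
  have hSchur := PosDef.fromBlocks₂₂ A A hD
  rw [hA.1.eq, posSemidef_fromBlocks_self_iff, and_iff_right hA] at hSchur
  exact hSchur.symm

end Field

end Matrix

/-- for symmetric P ≻ 0, R ⪰ 0 and κ > 0,
R − (κ/2)RP⁻¹R ⪰ 0  ⟺  P − (κ/2)R ⪰ 0. -/
theorem stmt_15 {n : ℕ} (R P : Matrix (Fin n) (Fin n) ℝ)
    (hR : R.PosSemidef) (hP : P.PosDef) (κ : ℝ) (hκ : 0 < κ) :
    (R - (κ / 2) • (R * P⁻¹ * R)).PosSemidef ↔ (P - (κ / 2) • R).PosSemidef := by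
  set c := κ / 2
  have hc : 0 < c := by positivity
  have hscale : c • (R - c • (R * P⁻¹ * R)) = c • R - c • R * P⁻¹ * (c • R) := by
    simp only [smul_sub, Matrix.smul_mul, Matrix.mul_smul, smul_smul]
  rw [← Matrix.posSemidef_smul_iff hc, hscale]
  exact (hR.smul hc.le).posSemidef_sub_mul_inv_mul_iff hP
end

section
/- Let H be a finite-dimensional real Hilbert space, P : H → H a self-adjoint positive definite linear map, D : H → 2^H maximally monotone (in the standard inner product), N : H → H a skew-adjoint bounded linear map, and H₀ : H → H an affine map such that Id − κP⁻¹∘H₀ is nonexpansive in the P-inner product ⟨x,y⟩_P := ⟨x, Py⟩ for some κ > 1. Then T := (Id + P⁻¹∘(D + N))⁻¹ ∘ (Id − P⁻¹∘H₀) is single-valued and κ/(2κ−1)-averaged nonexpansive in (H, ⟨·,·⟩_P). -/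
/-!
Minty's theorem gives the resolvent everywhere. In finite dimension it follows from the one-point
Kirszbraun extension theorem: the Cayley transform `x + u ↦ x - u` of a monotone graph is
1-Lipschitz, and if `y` is its value at `w` under a 1-Lipschitz extension, then `z = (w + y) / 2`
satisfies `0 ≤ ⟪z - x, (w - z) - u⟫` for every `(x, u)` in the graph, so `w - z ∈ A z` by
maximality. For finitely many balls, Kirszbraun's theorem comes from minimizing the largest ratio
`‖y - q i‖ / ‖w - a i‖`: a minimizer in the convex hull of the active centres has ratio at most 1
by an averaging identity, and a minimizer outside it can be pushed towards it, decreasing every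
active ratio. Compactness of balls handles infinitely many.

In the inner product `⟪x, P y⟫` the operator `P⁻¹ ∘ (D + N)` is maximally monotone (`N` is skew),
so its resolvent is single-valued, defined everywhere and firmly nonexpansive. Composed with the
`1/κ`-averaged map `Id - P⁻¹ ∘ H₀` it is `κ / (2κ - 1)`-averaged, with nonexpansive part
`R = κ⁻¹ ((1 - κ) Id + (2κ - 1) T)`; that `R` is nonexpansive is a single quadratic inequality.
-/

open Filter Topology
open scoped RealInnerProductSpace

section MonotoneOperators

variable {E : Type*} [NormedAddCommGroup E] [InnerProductSpace ℝ E]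

theorem norm_sum_smul_sq_of_sum_eq_one {ι : Type*} [Fintype ι] {μ : ι → ℝ}
    (hμ : ∑ i, μ i = 1) (x : ι → E) :
    ‖∑ i, μ i • x i‖ ^ 2 =
      ∑ i, μ i * ‖x i‖ ^ 2 - (∑ i, ∑ j, μ i * μ j * ‖x i - x j‖ ^ 2) / 2 := by
  have hcross : ‖∑ i, μ i • x i‖ ^ 2 = ∑ i, ∑ j, μ i * μ j * ⟪x i, x j⟫ := by
    rw [← real_inner_self_eq_norm_sq, sum_inner]
    refine Finset.sum_congr rfl fun i _ => ?_
    rw [inner_sum]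
    refine Finset.sum_congr rfl fun j _ => ?_
    rw [real_inner_smul_left, real_inner_smul_right]; ring
  have hsplit : ∀ i j, μ i * μ j * ‖x i - x j‖ ^ 2 =
      μ j * (μ i * ‖x i‖ ^ 2) + μ i * (μ j * ‖x j‖ ^ 2) - 2 * (μ i * μ j * ⟪x i, x j⟫) :=
    fun i j => by rw [norm_sub_sq_real]; ring
  simp only [hsplit, Finset.sum_sub_distrib, Finset.sum_add_distrib, ← Finset.sum_mul,
    ← Finset.mul_sum, hμ, one_mul, ← hcross]
  ring

theorem sq_le_one_of_sum_smul_eq_zero {ι : Type*} [Fintype ι] {μ : ι → ℝ}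
    (hμ0 : ∀ i, 0 ≤ μ i) (hμ1 : ∑ i, μ i = 1) {x s : ι → E} {c : ℝ}
    (hx : ∑ i, μ i • x i = 0) (hxs : ∀ i j, ‖x i - x j‖ ≤ ‖s i - s j‖)
    (hnorm : ∀ i, ‖x i‖ = c * ‖s i‖) (hs : ∀ i, s i ≠ 0) : c ^ 2 ≤ 1 := by
  have hx_id := norm_sum_smul_sq_of_sum_eq_one hμ1 x
  have hs_id := norm_sum_smul_sq_of_sum_eq_one hμ1 s
  have hdiam : ∑ i, ∑ j, μ i * μ j * ‖x i - x j‖ ^ 2 ≤ ∑ i, ∑ j, μ i * μ j * ‖s i - s j‖ ^ 2 :=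
    Finset.sum_le_sum fun i _ => Finset.sum_le_sum fun j _ =>
      mul_le_mul_of_nonneg_left (pow_le_pow_left₀ (norm_nonneg _) (hxs i j) 2)
        (mul_nonneg (hμ0 i) (hμ0 j))
  have hxs_sq : ∑ i, μ i * ‖x i‖ ^ 2 = c ^ 2 * ∑ i, μ i * ‖s i‖ ^ 2 := by
    simp only [hnorm, Finset.mul_sum]
    exact Finset.sum_congr rfl fun i _ => by ring
  have hpos : 0 < ∑ i, μ i * ‖s i‖ ^ 2 := by
    obtain ⟨i, hi⟩ : ∃ i, 0 < μ i := by
      by_contra! h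
      linarith [Finset.sum_nonpos fun i (_ : i ∈ Finset.univ) => h i]
    exact Finset.sum_pos' (fun i _ => mul_nonneg (hμ0 i) (sq_nonneg _))
      ⟨i, Finset.mem_univ i, mul_pos hi (pow_pos (norm_pos_iff.2 (hs i)) 2)⟩
  rw [hx, norm_zero] at hx_id
  have := sq_nonneg ‖∑ i, μ i • s i‖
  nlinarith

theorem sq_le_one_of_mem_convexHull {ι : Type*} {t : Set ι} {a q : ι → E} {w y : E} {c : ℝ}
    (hlip : ∀ i ∈ t, ∀ j ∈ t, ‖q i - q j‖ ≤ ‖a i - a j‖) (hw : ∀ i ∈ t, w ≠ a i)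
    (hdist : ∀ i ∈ t, ‖y - q i‖ = c * ‖w - a i‖) (hy : y ∈ convexHull ℝ (q '' t)) :
    c ^ 2 ≤ 1 := by
  obtain ⟨κ, _, μ, z, hμ0, hμ1, hz, rfl⟩ := mem_convexHull_iff_exists_fintype.1 hy
  choose idx hidx hqz using hz
  refine sq_le_one_of_sum_smul_eq_zero hμ0 hμ1 (x := fun k => z k - ∑ i, μ i • z i)
    (s := fun k => a (idx k) - w) ?_ (fun k l => ?_) (fun k => ?_) (fun k => ?_)
  · simp only [smul_sub, Finset.sum_sub_distrib, ← Finset.sum_smul, hμ1, one_smul, sub_self]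
  · rw [sub_sub_sub_cancel_right, sub_sub_sub_cancel_right, ← hqz, ← hqz]
    exact hlip _ (hidx k) _ (hidx l)
  · rw [norm_sub_rev, ← hqz, hdist _ (hidx k), norm_sub_rev]
  · exact sub_ne_zero.2 (hw _ (hidx k)).symm

theorem eventually_norm_add_smul_sub_lt {v y q : E} (h : 0 < ⟪v, q - y⟫) :
    ∀ᶠ τ in 𝓝[>] (0 : ℝ), ‖y + τ • v - q‖ < ‖y - q‖ := by
  have hε : 0 < 2 * ⟪v, q - y⟫ / (‖v‖ ^ 2 + 1) := by positivity
  filter_upwards [Ioo_mem_nhdsGT hε] with τ ⟨hτ0, hτ⟩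
  have hexpand : ‖y + τ • v - q‖ ^ 2 = ‖y - q‖ ^ 2 - τ * (2 * ⟪v, q - y⟫ - τ * ‖v‖ ^ 2) := by
    rw [add_sub_right_comm, norm_add_sq_real, norm_smul, real_inner_smul_right, Real.norm_eq_abs,
      abs_of_pos hτ0, ← neg_sub q y, inner_neg_left, real_inner_comm]
    ring
  have hgap : τ * ‖v‖ ^ 2 < 2 * ⟪v, q - y⟫ := by
    rw [lt_div_iff₀ (by positivity)] at hτ
    nlinarith [sq_nonneg ‖v‖]
  refine lt_of_pow_lt_pow_left₀ 2 (norm_nonneg _) ?_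
  rw [hexpand]
  nlinarith

theorem exists_forall_norm_sub_lt_of_notMem_convexHull [CompleteSpace E] {ι : Type*} [Finite ι]
    (q : ι → E) (r : ι → ℝ) {y₀ : E} (hle : ∀ i, ‖y₀ - q i‖ ≤ r i)
    (hy₀ : y₀ ∉ convexHull ℝ (q '' {i | ‖y₀ - q i‖ = r i})) :
    ∃ y, ∀ i, ‖y - q i‖ < r i := by
  obtain ⟨φ, u, hφy₀, hφhull⟩ := geometric_hahn_banach_point_closed (convex_convexHull ℝ _)
    ((Set.toFinite _).image q |>.isClosed_convexHull ℝ) hy₀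
  set v := (InnerProductSpace.toDual ℝ E).symm φ
  have hv : ∀ i, ‖y₀ - q i‖ = r i → 0 < ⟪v, q i - y₀⟫ := fun i hi => by
    rw [inner_sub_right, InnerProductSpace.toDual_symm_apply, InnerProductSpace.toDual_symm_apply]
    linarith [hφhull _ (subset_convexHull ℝ _ ⟨i, hi, rfl⟩)]
  have hev : ∀ i, ∀ᶠ τ in 𝓝[>] (0 : ℝ), ‖y₀ + τ • v - q i‖ < r i := fun i => by
    rcases (hle i).lt_or_eq with hlt | heq
    · have hcont : ContinuousAt (fun τ : ℝ => ‖y₀ + τ • v - q i‖) 0 := by fun_prop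
      refine nhdsWithin_le_nhds (hcont.eventually_lt continuousAt_const ?_)
      simpa using hlt
    · exact (eventually_norm_add_smul_sub_lt (hv i heq)).mono fun τ hτ => heq ▸ hτ
  obtain ⟨τ, hτ⟩ := (eventually_all.2 hev).exists
  exact ⟨y₀ + τ • v, hτ⟩

theorem exists_forall_norm_sub_le_of_fintype [FiniteDimensional ℝ E] {ι : Type*} [Fintype ι]
    (a q : ι → E) (w : E) (hlip : ∀ i j, ‖q i - q j‖ ≤ ‖a i - a j‖) :
    ∃ y, ∀ i, ‖y - q i‖ ≤ ‖w - a i‖ := by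
  cases isEmpty_or_nonempty ι
  · exact ⟨0, isEmptyElim⟩
  by_cases hw : ∃ i, w = a i
  · obtain ⟨i₀, rfl⟩ := hw
    exact ⟨q i₀, hlip i₀⟩
  simp only [not_exists] at hw
  have hr : ∀ i, 0 < ‖w - a i‖ := fun i => norm_pos_iff.2 (sub_ne_zero.2 (hw i))
  set f : E → ℝ := fun y => Finset.univ.sup' Finset.univ_nonempty fun i => ‖y - q i‖ / ‖w - a i‖
  have hf_ge : ∀ y i, ‖y - q i‖ / ‖w - a i‖ ≤ f y := fun y i =>
    Finset.le_sup' (fun i => ‖y - q i‖ / ‖w - a i‖) (Finset.mem_univ i)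
  have hf_cont : Continuous f := Continuous.finset_sup'_apply _ fun i _ => by fun_prop
  obtain ⟨i₁⟩ := ‹Nonempty ι›
  have hf_tendsto : Tendsto f (cocompact E) atTop := by
    refine tendsto_atTop_mono (hf_ge · i₁) (Tendsto.atTop_div_const (hr i₁) ?_)
    simpa only [dist_eq_norm] using tendsto_dist_right_cocompact_atTop (q i₁)
  obtain ⟨y₀, hy₀⟩ := hf_cont.exists_forall_le hf_tendsto
  have hle : ∀ i, ‖y₀ - q i‖ ≤ f y₀ * ‖w - a i‖ := fun i => (div_le_iff₀ (hr i)).1 (hf_ge y₀ i)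
  by_cases hc : f y₀ ≤ 1
  · exact ⟨y₀, fun i => (hle i).trans (by nlinarith [hr i])⟩
  by_cases hmem : y₀ ∈ convexHull ℝ (q '' {i | ‖y₀ - q i‖ = f y₀ * ‖w - a i‖})
  · have := sq_le_one_of_mem_convexHull (fun i _ j _ => hlip i j) (fun i _ => hw i)
      (fun i hi => hi) hmem
    nlinarith
  · obtain ⟨y, hy⟩ := exists_forall_norm_sub_lt_of_notMem_convexHull q _ hle hmem
    have : f y < f y₀ := (Finset.sup'_lt_iff _).2 fun i _ => (div_lt_iff₀ (hr i)).2 (hy i)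
    exact absurd (hy₀ y) this.not_ge

theorem exists_forall_norm_sub_le [FiniteDimensional ℝ E] {ι : Type*}
    (a q : ι → E) (w : E) (hlip : ∀ i j, ‖q i - q j‖ ≤ ‖a i - a j‖) :
    ∃ y, ∀ i, ‖y - q i‖ ≤ ‖w - a i‖ := by
  cases isEmpty_or_nonempty ι
  · exact ⟨0, isEmptyElim⟩
  obtain ⟨i₀⟩ := ‹Nonempty ι›
  let ball : ι → Set E := fun i => Metric.closedBall (q i) ‖w - a i‖
  have hfinite : ∀ u : Finset ι, (ball i₀ ∩ ⋂ i ∈ u, ball i).Nonempty := fun u => by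
    classical
    obtain ⟨y, hy⟩ := exists_forall_norm_sub_le_of_fintype (ι := ↥(insert i₀ u))
      (a ·) (q ·) w fun i j => hlip i j
    refine ⟨y, ?_, Set.mem_iInter₂.2 fun i hi => ?_⟩
    · simpa [ball, dist_eq_norm] using hy ⟨i₀, Finset.mem_insert_self _ _⟩
    · simpa [ball, dist_eq_norm] using hy ⟨i, Finset.mem_insert_of_mem hi⟩
  obtain ⟨y, -, hy⟩ := (isCompact_closedBall (q i₀) ‖w - a i₀‖).inter_iInter_nonempty ball
    (fun i => Metric.isClosed_closedBall) hfinite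
  exact ⟨y, fun i => by simpa [ball, dist_eq_norm] using Set.mem_iInter.1 hy i⟩

def IsMonotoneOperator (A : E → Set E) : Prop :=
  ∀ x y u v, u ∈ A x → v ∈ A y → 0 ≤ ⟪x - y, u - v⟫

structure IsMaximalMonotoneOperator (A : E → Set E) : Prop where
  monotone : IsMonotoneOperator A
  maximal : ∀ x u, (∀ y v, v ∈ A y → 0 ≤ ⟪x - y, u - v⟫) → u ∈ A x

theorem inner_add_sub_eq_norm_sq_sub_norm_sq (w y x u : E) :
    ⟪(w + y) - (2 : ℝ) • x, (w - y) - (2 : ℝ) • u⟫ = ‖w - (x + u)‖ ^ 2 - ‖y - (x - u)‖ ^ 2 := by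
  have h₁ : (w + y) - (2 : ℝ) • x = (w - (x + u)) + (y - (x - u)) := by module
  have h₂ : (w - y) - (2 : ℝ) • u = (w - (x + u)) - (y - (x - u)) := by module
  rw [h₁, h₂]
  generalize w - (x + u) = a
  generalize y - (x - u) = b
  rw [inner_add_left, inner_sub_right, inner_sub_right, real_inner_self_eq_norm_sq,
    real_inner_self_eq_norm_sq, real_inner_comm b a]
  ring

theorem norm_sub_sub_le_of_inner_nonneg {x y u v : E} (h : 0 ≤ ⟪x - y, u - v⟫) :
    ‖(x - u) - (y - v)‖ ≤ ‖(x + u) - (y + v)‖ := by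
  have h₁ : (x - u) - (y - v) = (x - y) - (u - v) := by abel
  have h₂ : (x + u) - (y + v) = (x - y) + (u - v) := by abel
  rw [h₁, h₂]
  refine le_of_pow_le_pow_left₀ two_ne_zero (norm_nonneg _) ?_
  rw [norm_sub_sq_real, norm_add_sq_real]
  linarith

theorem IsMaximalMonotoneOperator.exists_sub_mem [FiniteDimensional ℝ E] {A : E → Set E}
    (hA : IsMaximalMonotoneOperator A) (w : E) : ∃ z, w - z ∈ A z := by
  obtain ⟨y, hy⟩ := exists_forall_norm_sub_le
    (fun m : {m : E × E // m.2 ∈ A m.1} => m.1.1 + m.1.2) (fun m => m.1.1 - m.1.2) w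
    fun m m' => norm_sub_sub_le_of_inner_nonneg (hA.monotone _ _ _ _ m.2 m'.2)
  refine ⟨(2 : ℝ)⁻¹ • (w + y), hA.maximal _ _ fun x u hu => ?_⟩
  have hxu : ‖y - (x - u)‖ ≤ ‖w - (x + u)‖ := hy ⟨(x, u), hu⟩
  have hsplit : ⟪(2 : ℝ)⁻¹ • (w + y) - x, (w - (2 : ℝ)⁻¹ • (w + y)) - u⟫ =
      4⁻¹ * ⟪(w + y) - (2 : ℝ) • x, (w - y) - (2 : ℝ) • u⟫ := by
    rw [show (2 : ℝ)⁻¹ • (w + y) - x = (2 : ℝ)⁻¹ • ((w + y) - (2 : ℝ) • x) by module,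
      show (w - (2 : ℝ)⁻¹ • (w + y)) - u = (2 : ℝ)⁻¹ • ((w - y) - (2 : ℝ) • u) by module,
      real_inner_smul_left, real_inner_smul_right]
    ring
  rw [hsplit, inner_add_sub_eq_norm_sq_sub_norm_sq]
  have := pow_le_pow_left₀ (norm_nonneg _) hxu 2
  nlinarith

theorem inner_self_apply_nonneg {P : E →ₗ[ℝ] E} (hPpd : ∀ x, x ≠ 0 → 0 < ⟪x, P x⟫) (x : E) :
    0 ≤ ⟪x, P x⟫ := by
  rcases eq_or_ne x 0 with rfl | hx
  · simp
  · exact (hPpd x hx).le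

theorem IsMaximalMonotoneOperator.exists_sub_apply_mem [FiniteDimensional ℝ E]
    {P : E →ₗ[ℝ] E} (hPsa : ∀ x y, ⟪P x, y⟫ = ⟪x, P y⟫) (hPpd : ∀ x, x ≠ 0 → 0 < ⟪x, P x⟫)
    {B : E → Set E} (hB : IsMaximalMonotoneOperator B) (b : E) : ∃ z, b - P z ∈ B z := by
  have hP_surj : Function.Surjective P := LinearMap.injective_iff_surjective.1 fun x y hxy => by
    by_contra hne
    have := hPpd (x - y) (sub_ne_zero.2 hne)
    rw [map_sub, hxy, sub_self, inner_zero_right] at this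
    exact this.false
  obtain ⟨w, rfl⟩ := hP_surj b
  let core : InnerProductSpace.Core ℝ E :=
    { inner x y := ⟪x, P y⟫
      conj_inner_symm x y := (hPsa y x).symm.trans (real_inner_comm x (P y))
      re_inner_nonneg := inner_self_apply_nonneg hPpd
      definite x hx := by_contra fun hne => (hPpd x hne).ne' hx
      add_left x y z := inner_add_left x y (P z)
      smul_left x y r := by simp [real_inner_smul_left] }
  -- `P⁻¹ ∘ B` is maximally monotone for the inner product `⟪x, P y⟫`
  have hA : @IsMaximalMonotoneOperator E core.toNormedAddCommGroup
      (InnerProductSpace.ofCore core.toCore) fun z => {a | P a ∈ B z} := by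
    refine @IsMaximalMonotoneOperator.mk E core.toNormedAddCommGroup
      (InnerProductSpace.ofCore core.toCore) _ ?_ ?_
    · intro x y u v hu hv
      show 0 ≤ ⟪x - y, P (u - v)⟫
      rw [map_sub]
      exact hB.monotone x y _ _ hu hv
    · intro x u hxu
      refine hB.maximal x (P u) fun y v hv => ?_
      obtain ⟨v, rfl⟩ := hP_surj v
      rw [← map_sub]
      exact hxu y v hv
  obtain ⟨z, hz⟩ := @IsMaximalMonotoneOperator.exists_sub_mem E core.toNormedAddCommGroup
    (InnerProductSpace.ofCore core.toCore) ‹_› _ hA w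
  exact ⟨z, by simpa [map_sub] using hz⟩

theorem inner_sub_sub_skew {N : E →ₗ[ℝ] E} (hN : ∀ x y, ⟪N x, y⟫ = -⟪x, N y⟫) (x y u v : E) :
    ⟪x - y, (u - N x) - (v - N y)⟫ = ⟪x - y, u - v⟫ := by
  have hN0 : ⟪x - y, N (x - y)⟫ = 0 := by
    linarith [hN (x - y) (x - y), real_inner_comm (N (x - y)) (x - y)]
  rw [show (u - N x) - (v - N y) = (u - v) - N (x - y) by rw [map_sub]; abel, inner_sub_right,
    hN0, sub_zero]

theorem IsMaximalMonotoneOperator.add_skew {D : E → Set E} (hD : IsMaximalMonotoneOperator D)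
    {N : E →ₗ[ℝ] E} (hN : ∀ x y, ⟪N x, y⟫ = -⟪x, N y⟫) :
    IsMaximalMonotoneOperator fun z => {u | u - N z ∈ D z} where
  monotone x y u v hu hv := by
    rw [← inner_sub_sub_skew hN]
    exact hD.monotone x y _ _ hu hv
  maximal x u hxu := hD.maximal x _ fun y v hv => by
    have := hxu y (v + N y) (by simpa using hv)
    rwa [← inner_sub_sub_skew hN, add_sub_cancel_right] at this

theorem IsMonotoneOperator.inner_sub_le {B : E → Set E} (hB : IsMonotoneOperator B)
    (P : E →ₗ[ℝ] E) {b₁ b₂ z₁ z₂ : E} (h₁ : b₁ - P z₁ ∈ B z₁) (h₂ : b₂ - P z₂ ∈ B z₂) :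
    ⟪z₁ - z₂, P (z₁ - z₂)⟫ ≤ ⟪z₁ - z₂, b₁ - b₂⟫ := by
  have := hB z₁ z₂ _ _ h₁ h₂
  rw [show (b₁ - P z₁) - (b₂ - P z₂) = (b₁ - b₂) - P (z₁ - z₂) by rw [map_sub]; abel,
    inner_sub_right] at this
  linarith

theorem IsMonotoneOperator.eq_of_sub_mem {B : E → Set E} (hB : IsMonotoneOperator B)
    {P : E →ₗ[ℝ] E} (hPpd : ∀ x, x ≠ 0 → 0 < ⟪x, P x⟫) {b z₁ z₂ : E}
    (h₁ : b - P z₁ ∈ B z₁) (h₂ : b - P z₂ ∈ B z₂) : z₁ = z₂ := by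
  by_contra hne
  have := hB.inner_sub_le P h₁ h₂
  rw [sub_self, inner_zero_right] at this
  exact (hPpd _ (sub_ne_zero.2 hne)).not_ge this

theorem inner_averaged_le {P : E →ₗ[ℝ] E} (hPsa : ∀ x y, ⟪P x, y⟫ = ⟪x, P y⟫)
    (hPnn : ∀ x, 0 ≤ ⟪x, P x⟫)
    {κ : ℝ} (hκ : 1 / 2 ≤ κ) {d q z : E} (hz : ⟪z, P z⟫ ≤ ⟪z, P (d - q)⟫)
    (hq : ⟪d - κ • q, P (d - κ • q)⟫ ≤ ⟪d, P d⟫) :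
    ⟪κ⁻¹ • ((1 - κ) • d + (2 * κ - 1) • z), P (κ⁻¹ • ((1 - κ) • d + (2 * κ - 1) • z))⟫ ≤
      ⟪d, P d⟫ := by
  have hsymm : ∀ x y, ⟪x, P y⟫ = ⟪y, P x⟫ := fun x y => by rw [← hPsa, real_inner_comm]
  have hκ0 : 0 < κ := by linarith
  rw [map_smul, real_inner_smul_left, real_inner_smul_right, ← mul_assoc, ← mul_inv,
    inv_mul_le_iff₀ (by positivity)]
  have hrest := hPnn (d - z - κ • q)
  simp only [map_add, map_sub, map_smul, inner_add_left, inner_add_right, inner_sub_left,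
    inner_sub_right, real_inner_smul_left, real_inner_smul_right] at hz hq hrest ⊢
  rw [hsymm z d, hsymm q d, hsymm q z] at *
  have h2κ : 0 ≤ 2 * κ - 1 := by linarith
  -- with `v = (1 - κ) • d + (2κ - 1) • z` and `e = d - z - κ • q`, the difference
  -- `κ² ⟪d, P d⟫ - ⟪v, P v⟫` is `2κ - 1` times `2κ · (gap in hz) + (gap in hq) + ⟪e, P e⟫`
  nlinarith [mul_nonneg (mul_nonneg h2κ hκ0.le) (sub_nonneg.2 hz), mul_nonneg h2κ (sub_nonneg.2 hq),
    mul_nonneg h2κ hrest]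

end MonotoneOperators

theorem stmt_16_general {H : Type*} [NormedAddCommGroup H] [InnerProductSpace ℝ H]
    [FiniteDimensional ℝ H]
    (P Pinv N : H →ₗ[ℝ] H) (H0 : H → H) (D : H → Set H) (κ : ℝ) (hκ : 1 < κ)
    (hPsa : ∀ x y : H, ⟪P x, y⟫ = ⟪x, P y⟫)
    (hPpd : ∀ x : H, x ≠ 0 → 0 < ⟪x, P x⟫)
    (hPinv : ∀ x : H, P (Pinv x) = x ∧ Pinv (P x) = x)
    (hDmono : ∀ x y u v : H, u ∈ D x → v ∈ D y → 0 ≤ ⟪x - y, u - v⟫)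
    (hDmax : ∀ x u : H, (∀ y v : H, v ∈ D y → 0 ≤ ⟪x - y, u - v⟫) → u ∈ D x)
    (hNskew : ∀ x y : H, ⟪N x, y⟫ = -⟪x, N y⟫)
    (hnonexp : ∀ x y : H,
      ⟪(x - y) - κ • (Pinv (H0 x) - Pinv (H0 y)),
        P ((x - y) - κ • (Pinv (H0 x) - Pinv (H0 y)))⟫ ≤ ⟪x - y, P (x - y)⟫) :
    ∃ T : H → H,
      (∀ x z : H, T x = z ↔ P x - H0 x - P z - N z ∈ D z) ∧
      ∃ R : H → H,
        (∀ x y : H, ⟪R x - R y, P (R x - R y)⟫ ≤ ⟪x - y, P (x - y)⟫) ∧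
        ∀ x : H, T x = (1 - κ / (2 * κ - 1)) • x + (κ / (2 * κ - 1)) • R x := by
  have hB := IsMaximalMonotoneOperator.add_skew ⟨hDmono, hDmax⟩ hNskew
  choose T hT using fun x => hB.exists_sub_apply_mem hPsa hPpd (P x - H0 x)
  refine ⟨T, fun x z => ⟨fun h => h ▸ hT x, hB.monotone.eq_of_sub_mem hPpd (hT x)⟩,
    fun x => κ⁻¹ • ((1 - κ) • x + (2 * κ - 1) • T x), fun x y => ?_, fun x => ?_⟩
  · have hres := hB.monotone.inner_sub_le P (hT x) (hT y)
    have hPq : P (Pinv (H0 x) - Pinv (H0 y)) = H0 x - H0 y := by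
      rw [map_sub, (hPinv _).1, (hPinv _).1]
    rw [show (P x - H0 x) - (P y - H0 y) = P ((x - y) - (Pinv (H0 x) - Pinv (H0 y))) by
      rw [map_sub, map_sub, hPq]; abel] at hres
    have hR : κ⁻¹ • ((1 - κ) • x + (2 * κ - 1) • T x) - κ⁻¹ • ((1 - κ) • y + (2 * κ - 1) • T y) =
        κ⁻¹ • ((1 - κ) • (x - y) + (2 * κ - 1) • (T x - T y)) := by module
    rw [hR]
    exact inner_averaged_le hPsa (inner_self_apply_nonneg hPpd) (by linarith) hres (hnonexp x y)
  · have h2κ : κ * 2 - 1 ≠ 0 := by linarith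
    have hκ0 : κ ≠ 0 := by linarith
    match_scalars <;> field_simp
    ring

/-- the operator T = (Id + P⁻¹(D+N))⁻¹ ∘ (Id − P⁻¹H₀) is single-valued
and κ/(2κ−1)-averaged nonexpansive in the P-inner product. -/
theorem stmt_16 {H : Type*} [NormedAddCommGroup H] [InnerProductSpace ℝ H]
    [FiniteDimensional ℝ H]
    (P Pinv N : H →ₗ[ℝ] H) (H0 : H → H) (D : H → Set H) (κ : ℝ) (hκ : 1 < κ)
    (hPsa : ∀ x y : H, ⟪P x, y⟫ = ⟪x, P y⟫)
    (hPpd : ∀ x : H, x ≠ 0 → 0 < ⟪x, P x⟫)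
    (hPinv : ∀ x : H, P (Pinv x) = x ∧ Pinv (P x) = x)
    (hDmono : ∀ x y u v : H, u ∈ D x → v ∈ D y → 0 ≤ ⟪x - y, u - v⟫)
    (hDmax : ∀ x u : H, (∀ y v : H, v ∈ D y → 0 ≤ ⟪x - y, u - v⟫) → u ∈ D x)
    (hNskew : ∀ x y : H, ⟪N x, y⟫ = -⟪x, N y⟫)
    (hH0affine : ∃ (A : H →ₗ[ℝ] H) (b : H), ∀ x, H0 x = A x + b)
    (hnonexp : ∀ x y : H,
      ⟪(x - y) - κ • (Pinv (H0 x) - Pinv (H0 y)),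
        P ((x - y) - κ • (Pinv (H0 x) - Pinv (H0 y)))⟫ ≤ ⟪x - y, P (x - y)⟫) :
    ∃ T : H → H,
      (∀ x z : H, T x = z ↔ P x - H0 x - P z - N z ∈ D z) ∧
      ∃ R : H → H,
        (∀ x y : H, ⟪R x - R y, P (R x - R y)⟫ ≤ ⟪x - y, P (x - y)⟫) ∧
        ∀ x : H, T x = (1 - κ / (2 * κ - 1)) • x + (κ / (2 * κ - 1)) • R x :=
  stmt_16_general P Pinv N H0 D κ hκ hPsa hPpd hPinv hDmono hDmax hNskew hnonexp
end

section
/- Let H be a finite-dimensional real Hilbert space and T : H → H nonexpansive with Fix(T) ≠ ∅. For any sequence (μ_k) ⊂ [0,1] with Σ_k μ_k(1−μ_k) = ∞ and any x₀ ∈ H, the sequence x_{k+1} = (1−μ_k)x_k + μ_k T(x_k) converges to a point in Fix(T). -/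
open Filter Topology Function

/-!
A fixed point `p` of `T` satisfies
`‖xₖ₊₁ - p‖² = ‖xₖ - p‖² - μₖ(1 - μₖ)‖T xₖ - xₖ‖² - μₖ(‖xₖ - p‖² - ‖T xₖ - p‖²)`,
so the distance to every fixed point decreases (Fejér monotonicity) and
`∑ μₖ(1 - μₖ)‖T xₖ - xₖ‖² ≤ ‖x₀ - p‖²`. The residual `‖T xₖ - xₖ‖` is nonincreasing, so the
divergence of `∑ μₖ(1 - μₖ)` forces it to zero. The bounded sequence has a convergent
subsequence, whose limit `q` is a fixed point by continuity of `T`; Fejér monotonicity with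
respect to `q` then upgrades subsequential convergence to convergence.
-/

theorem norm_one_sub_smul_add_smul_sq {H : Type*} [NormedAddCommGroup H]
    [InnerProductSpace ℝ H] (a b : H) (t : ℝ) :
    ‖(1 - t) • a + t • b‖ ^ 2 = (1 - t) * ‖a‖ ^ 2 + t * ‖b‖ ^ 2 - t * (1 - t) * ‖a - b‖ ^ 2 := by
  simp only [← real_inner_self_eq_norm_sq, inner_add_left, inner_add_right, inner_sub_left,
    inner_sub_right, real_inner_smul_left, real_inner_smul_right, real_inner_comm b a]
  ring

theorem tendsto_zero_of_antitone_of_sum_mul_le {a w : ℕ → ℝ} {C : ℝ} (ha : Antitone a)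
    (ha₀ : ∀ k, 0 ≤ a k) (hw : ∀ k, 0 ≤ w k)
    (hdiv : Tendsto (fun n => ∑ k ∈ Finset.range n, w k) atTop atTop)
    (hC : ∀ n, ∑ k ∈ Finset.range n, w k * a k ≤ C) : Tendsto a atTop (𝓝 0) := by
  have hbound : ∀ n, a n * ∑ k ∈ Finset.range n, w k ≤ C := fun n =>
    calc a n * ∑ k ∈ Finset.range n, w k
        = ∑ k ∈ Finset.range n, w k * a n := by rw [Finset.mul_sum]; simp only [mul_comm]
      _ ≤ ∑ k ∈ Finset.range n, w k * a k := Finset.sum_le_sum fun k hk =>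
          mul_le_mul_of_nonneg_left (ha (Finset.mem_range.mp hk).le) (hw k)
      _ ≤ C := hC n
  refine tendsto_of_tendsto_of_tendsto_of_le_of_le' tendsto_const_nhds
    (tendsto_const_nhds.div_atTop hdiv :
      Tendsto (fun n => C / ∑ k ∈ Finset.range n, w k) atTop (𝓝 0)) (Eventually.of_forall ha₀) ?_
  filter_upwards [hdiv.eventually_gt_atTop 0] with n hn
  rw [le_div_iff₀ hn]
  exact hbound n

theorem tendsto_of_antitone_dist_of_tendsto_subseq {X : Type*} [PseudoMetricSpace X]
    {x : ℕ → X} {q : X} {φ : ℕ → ℕ} (hanti : Antitone fun k => dist (x k) q)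
    (hφ : StrictMono φ) (hsub : Tendsto (x ∘ φ) atTop (𝓝 q)) : Tendsto x atTop (𝓝 q) := by
  have hlim : Tendsto (fun k => dist (x k) q) atTop (𝓝 (⨅ k, dist (x k) q)) :=
    tendsto_atTop_ciInf hanti ⟨0, by rintro _ ⟨k, rfl⟩; exact dist_nonneg⟩
  have hinf : (⨅ k, dist (x k) q) = 0 :=
    tendsto_nhds_unique (hlim.comp hφ.tendsto_atTop) (tendsto_iff_dist_tendsto_zero.mp hsub)
  rw [tendsto_iff_dist_tendsto_zero, ← hinf]
  exact hlim

theorem isFixedPt_of_tendsto_sub_self_of_tendsto {E : Type*} [NormedAddCommGroup E]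
    {T : E → E} (hT : Continuous T) {ι : Type*} {l : Filter ι} [l.NeBot] {y : ι → E} {q : E}
    (hres : Tendsto (fun k => T (y k) - y k) l (𝓝 0)) (hy : Tendsto y l (𝓝 q)) :
    IsFixedPt T q :=
  sub_eq_zero.mp <| tendsto_nhds_unique (((hT.tendsto q).comp hy).sub hy) hres

namespace KrasnoselskiiMann

variable {H : Type*} [NormedAddCommGroup H] [InnerProductSpace ℝ H] {T : H → H}

theorem norm_sq_step_sub_le (hT : ∀ x y : H, ‖T x - T y‖ ≤ ‖x - y‖) {t : ℝ}
    (ht : t ∈ Set.Icc (0 : ℝ) 1) (y : H) {p : H} (hp : IsFixedPt T p) :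
    ‖(1 - t) • y + t • T y - p‖ ^ 2 ≤ ‖y - p‖ ^ 2 - t * (1 - t) * ‖T y - y‖ ^ 2 := by
  obtain ⟨ht₀, -⟩ := ht
  have hTp : ‖T y - p‖ ≤ ‖y - p‖ := by simpa only [hp.eq] using hT y p
  have hsq : ‖T y - p‖ ^ 2 ≤ ‖y - p‖ ^ 2 := pow_le_pow_left₀ (norm_nonneg _) hTp 2
  rw [show (1 - t) • y + t • T y - p = (1 - t) • (y - p) + t • (T y - p) by module,
    norm_one_sub_smul_add_smul_sq, show y - p - (T y - p) = -(T y - y) by abel, norm_neg]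
  nlinarith

theorem norm_step_residual_le (hT : ∀ x y : H, ‖T x - T y‖ ≤ ‖x - y‖) {t : ℝ}
    (ht : t ∈ Set.Icc (0 : ℝ) 1) (y : H) :
    ‖T ((1 - t) • y + t • T y) - ((1 - t) • y + t • T y)‖ ≤ ‖T y - y‖ := by
  obtain ⟨ht₀, ht₁⟩ := ht
  set z := (1 - t) • y + t • T y
  calc ‖T z - z‖ ≤ ‖T z - T y‖ + ‖T y - z‖ := norm_sub_le_norm_sub_add_norm_sub _ _ _
    _ ≤ ‖z - y‖ + ‖T y - z‖ := by gcongr; exact hT _ _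
    _ = ‖t • (T y - y)‖ + ‖(1 - t) • (T y - y)‖ := by
        congr 2 <;> simp only [z] <;> module
    _ = ‖T y - y‖ := by
        rw [norm_smul, norm_smul, Real.norm_of_nonneg ht₀, Real.norm_of_nonneg (sub_nonneg.2 ht₁)]
        ring

variable {μ : ℕ → ℝ} {x : ℕ → H}

theorem antitone_dist_fixedPt (hT : ∀ x y : H, ‖T x - T y‖ ≤ ‖x - y‖)
    (hμ : ∀ k, μ k ∈ Set.Icc (0 : ℝ) 1) (hrec : ∀ k, x (k + 1) = (1 - μ k) • x k + μ k • T (x k))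
    {p : H} (hp : IsFixedPt T p) : Antitone fun k => dist (x k) p :=
  antitone_nat_of_succ_le fun k => by
    have hw : 0 ≤ μ k * (1 - μ k) := mul_nonneg (hμ k).1 (sub_nonneg.2 (hμ k).2)
    rw [dist_eq_norm, dist_eq_norm, ← pow_le_pow_iff_left₀ (norm_nonneg _) (norm_nonneg _)
      two_ne_zero, hrec k]
    nlinarith [norm_sq_step_sub_le hT (hμ k) (x k) hp, sq_nonneg ‖T (x k) - x k‖]

theorem antitone_residual_sq (hT : ∀ x y : H, ‖T x - T y‖ ≤ ‖x - y‖)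
    (hμ : ∀ k, μ k ∈ Set.Icc (0 : ℝ) 1) (hrec : ∀ k, x (k + 1) = (1 - μ k) • x k + μ k • T (x k)) :
    Antitone fun k => ‖T (x k) - x k‖ ^ 2 :=
  antitone_nat_of_succ_le fun k => by
    rw [hrec k]; gcongr; exact norm_step_residual_le hT (hμ k) (x k)

theorem sum_mul_residual_sq_le (hT : ∀ x y : H, ‖T x - T y‖ ≤ ‖x - y‖)
    (hμ : ∀ k, μ k ∈ Set.Icc (0 : ℝ) 1) (hrec : ∀ k, x (k + 1) = (1 - μ k) • x k + μ k • T (x k))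
    {p : H} (hp : IsFixedPt T p) (n : ℕ) :
    ∑ k ∈ Finset.range n, μ k * (1 - μ k) * ‖T (x k) - x k‖ ^ 2 ≤ ‖x 0 - p‖ ^ 2 :=
  calc ∑ k ∈ Finset.range n, μ k * (1 - μ k) * ‖T (x k) - x k‖ ^ 2
      ≤ ∑ k ∈ Finset.range n, (‖x k - p‖ ^ 2 - ‖x (k + 1) - p‖ ^ 2) :=
        Finset.sum_le_sum fun k _ => by
          linarith [hrec k ▸ norm_sq_step_sub_le hT (hμ k) (x k) hp]
    _ = ‖x 0 - p‖ ^ 2 - ‖x n - p‖ ^ 2 := Finset.sum_range_sub' (fun k => ‖x k - p‖ ^ 2) n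
    _ ≤ ‖x 0 - p‖ ^ 2 := sub_le_self _ (sq_nonneg _)

theorem tendsto_residual_zero (hT : ∀ x y : H, ‖T x - T y‖ ≤ ‖x - y‖)
    (hμ : ∀ k, μ k ∈ Set.Icc (0 : ℝ) 1)
    (hdiv : Tendsto (fun n => ∑ k ∈ Finset.range n, μ k * (1 - μ k)) atTop atTop)
    (hrec : ∀ k, x (k + 1) = (1 - μ k) • x k + μ k • T (x k)) {p : H} (hp : IsFixedPt T p) :
    Tendsto (fun k => T (x k) - x k) atTop (𝓝 0) := by
  rw [tendsto_zero_iff_norm_tendsto_zero]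
  simpa using (tendsto_zero_of_antitone_of_sum_mul_le (antitone_residual_sq hT hμ hrec)
    (fun k => sq_nonneg _) (fun k => mul_nonneg (hμ k).1 (sub_nonneg.2 (hμ k).2)) hdiv
    (sum_mul_residual_sq_le hT hμ hrec hp)).sqrt

end KrasnoselskiiMann

/-- Krasnosel'skiĭ–Mann iteration of a nonexpansive map with a fixed
point converges to a fixed point. -/
theorem stmt_17 {H : Type*} [NormedAddCommGroup H] [InnerProductSpace ℝ H]
    [FiniteDimensional ℝ H]
    (T : H → H) (hT : ∀ x y : H, ‖T x - T y‖ ≤ ‖x - y‖) (hfix : ∃ x, T x = x)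
    (μ : ℕ → ℝ) (hμ : ∀ k, μ k ∈ Set.Icc (0 : ℝ) 1)
    (hdiv : Tendsto (fun n => ∑ k ∈ Finset.range n, μ k * (1 - μ k)) atTop atTop)
    (x : ℕ → H)
    (hrec : ∀ k, x (k + 1) = (1 - μ k) • x k + μ k • T (x k)) :
    ∃ p : H, T p = p ∧ Tendsto x atTop (nhds p) := by
  obtain ⟨p, hp⟩ := hfix
  have hfejer {q : H} (hq : IsFixedPt T q) : Antitone fun k => dist (x k) q :=
    KrasnoselskiiMann.antitone_dist_fixedPt hT hμ hrec hq
  obtain ⟨q, -, φ, hφ, hq⟩ := tendsto_subseq_of_bounded Metric.isBounded_closedBall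
    fun k => Metric.mem_closedBall.2 (hfejer hp (Nat.zero_le k))
  have hTq : IsFixedPt T q := isFixedPt_of_tendsto_sub_self_of_tendsto
    (LipschitzWith.mk_one fun a b => by simpa only [dist_eq_norm] using hT a b).continuous
    ((KrasnoselskiiMann.tendsto_residual_zero hT hμ hdiv hrec hp).comp hφ.tendsto_atTop) hq
  exact ⟨q, hTq, tendsto_of_antitone_dist_of_tendsto_subseq (hfejer hTq) hφ hq⟩
end
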